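/- Let G be a connected graph on n ≥ 2 vertices. For real α, let (^α 𝕄)_i = (Σ_j d_{ij}𝔻_jᵅ)/𝔻_iᵅ be the generalized average transmissions, assumed ordered (^α 𝕄)₁ ≥ ... ≥ (^α 𝕄)_n, and let N = max_{i,j} d_{ij}𝔻_jᵅ/𝔻_iᵅ. Then for each 1 ≤ i ≤ n, ρ(𝔻(G)) ≤ ((^α 𝕄)_i − N + √(((^α 𝕄)_i + N)² + 4N·Σ_{k=1}^{i−1}((^α 𝕄)_k − (^α 𝕄)_i)))/2. -/

import Mathlib

open Matrix Finset Real

/-- Spectral radius: largest modulus of a complex eigenvalue (root of the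
characteristic polynomial). -/
noncomputable def specRad {n : ℕ} (A : Matrix (Fin n) (Fin n) ℝ) : ℝ :=
  (((A.map (Complex.ofReal)).charpoly.roots).map (fun z => ‖z‖)).foldr max 0

/-- Irreducibility of a nonnegative matrix. -/
def Irred {n : ℕ} (A : Matrix (Fin n) (Fin n) ℝ) : Prop :=
  ∀ i j : Fin n, ∃ k : ℕ, 0 < (A ^ k) i j

/-!
Scaling the distance matrix by `p j = 𝔻_j ^ α` turns its row sums into the `𝕄 k` and bounds
its entries by `N`. With `S = ∑_{k < i} (𝕄 k - 𝕄 i)`, the bound `ψ` is the larger root of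
`x ^ 2 - (𝕄 i - N) x - N (𝕄 i + S)`, and the positive vector `w j = p j (ψ + N + 𝕄 j - 𝕄 i)`
satisfies `𝔻 w ≤ ψ w`: in row `k` only the columns `j < i`, `j ≠ k` contribute positively, each
by at most `N p k (𝕄 j - 𝕄 i)`, and the root equation absorbs the rest. Gershgorin's theorem for
`diag(w)⁻¹ 𝔻 diag(w)`, whose row sums are then at most `ψ`, bounds every eigenvalue by `ψ`.
-/

theorem Multiset.foldr_max_le {α : Type*} [LinearOrder α] {a b : α} (hb : b ≤ a)
    {s : Multiset α} (h : ∀ x ∈ s, x ≤ a) : s.foldr max b ≤ a := by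
  induction s using Multiset.induction_on with
  | empty => simpa using hb
  | cons b s ih =>
    rw [Multiset.foldr_cons]
    exact max_le (h b (mem_cons_self b s)) (ih fun x hx => h x (mem_cons_of_mem hx))

section Gershgorin

variable {ι : Type*} [Fintype ι] [DecidableEq ι]

theorem Matrix.charpoly_diagonal_inv_mul_mul_diagonal {K : Type*} [Field K] (A : Matrix ι ι K)
    {d : ι → K} (hd : ∀ i, d i ≠ 0) : (diagonal d⁻¹ * A * diagonal d).charpoly = A.charpoly := by
  rw [charpoly_mul_comm, ← mul_assoc, diagonal_mul_diagonal]
  simp [hd]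

theorem norm_le_of_isRoot_charpoly_of_mulVec_le {A : Matrix ι ι ℝ} (hA : ∀ i j, 0 ≤ A i j)
    {w : ι → ℝ} (hw : ∀ i, 0 < w i) {ψ : ℝ} (hAw : A *ᵥ w ≤ ψ • w) {μ : ℂ}
    (hμ : (A.map (↑)).charpoly.IsRoot μ) : ‖μ‖ ≤ ψ := by
  set C : Matrix ι ι ℂ :=
    diagonal (fun i => (w i : ℂ))⁻¹ * A.map (↑) * diagonal (fun i => (w i : ℂ))
  have hC : ∀ k j, ‖C k j‖ = A k j * w j / w k := by
    intro k j
    have : C k j = ((A k j * w j / w k : ℝ) : ℂ) := by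
      simp [C, diagonal_mul, mul_diagonal]
      ring
    have hw₀ := hw k; have hw₁ := hw j; have hA₀ := hA k j
    rw [this, Complex.norm_real, Real.norm_of_nonneg (by positivity)]
  have hμC : Module.End.HasEigenvalue (toLin' C) μ := by
    rw [Module.End.hasEigenvalue_iff_isRoot_charpoly, charpoly_toLin',
      charpoly_diagonal_inv_mul_mul_diagonal _ fun i => by exact_mod_cast (hw i).ne']
    exact hμ
  obtain ⟨k, hk⟩ := eigenvalue_mem_ball hμC
  rw [mem_closedBall_iff_norm] at hk
  calc ‖μ‖ ≤ ‖C k k‖ + ‖μ - C k k‖ := norm_le_insert' _ _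
    _ ≤ ∑ j, ‖C k j‖ := by rw [← add_sum_erase _ _ (mem_univ k)]; gcongr
    _ = (A *ᵥ w) k / w k := by simp only [hC, mulVec, dotProduct, sum_div]
    _ ≤ ψ := by simpa [div_le_iff₀ (hw k)] using hAw k

end Gershgorin

theorem specRad_le_of_mulVec_le {n : ℕ} {A : Matrix (Fin n) (Fin n) ℝ} (hA : ∀ i j, 0 ≤ A i j)
    {w : Fin n → ℝ} (hw : ∀ i, 0 < w i) {ψ : ℝ} (hψ : 0 ≤ ψ) (hAw : A *ᵥ w ≤ ψ • w) :
    specRad A ≤ ψ := by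
  refine Multiset.foldr_max_le hψ fun x hx => ?_
  obtain ⟨μ, hμ, rfl⟩ := Multiset.mem_map.mp hx
  exact norm_le_of_isRoot_charpoly_of_mulVec_le hA hw hAw (Polynomial.isRoot_of_mem_roots hμ)

theorem sum_mul_le_mul_sum_max_sub {ι : Type*} [Fintype ι] [DecidableEq ι] {b x : ι → ℝ}
    {N : ℝ} {k : ι} (hb : 0 ≤ b) (hbN : ∀ j, b j ≤ N) (hbk : b k = 0) :
    ∑ j, b j * x j ≤ N * (∑ j, max (x j) 0 - x k) := by
  have hN : 0 ≤ N := (hb k).trans (hbN k)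
  calc ∑ j, b j * x j = ∑ j ∈ univ.erase k, b j * x j := by
        rw [← add_sum_erase _ _ (mem_univ k), hbk, zero_mul, zero_add]
    _ ≤ ∑ j ∈ univ.erase k, N * max (x j) 0 := by
        refine sum_le_sum fun j _ => ?_
        exact (mul_le_mul_of_nonneg_left (le_max_left _ _) (hb j)).trans
          (mul_le_mul_of_nonneg_right (hbN j) (le_max_right _ _))
    _ = N * (∑ j, max (x j) 0 - max (x k) 0) := by
        rw [← mul_sum, ← sum_erase_add _ _ (mem_univ k), add_sub_cancel_right]
    _ ≤ N * (∑ j, max (x j) 0 - x k) := by gcongr; exact le_max_left _ _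

theorem Antitone.sum_max_sub_zero {ι : Type*} [Fintype ι] [LinearOrder ι]
    [LocallyFiniteOrderBot ι] {r : ι → ℝ} (hr : Antitone r) (i : ι) :
    ∑ j, max (r j - r i) 0 = ∑ j ∈ Iio i, (r j - r i) := by
  rw [← sum_filter_add_sum_filter_not univ (· < i)]
  have hlt : ∀ j ∈ univ.filter (· < i), max (r j - r i) 0 = r j - r i := fun j hj =>
    max_eq_left (sub_nonneg.2 (hr (mem_filter.1 hj).2.le))
  have hge : ∀ j ∈ univ.filter (¬ · < i), max (r j - r i) 0 = 0 := fun j hj =>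
    max_eq_right (sub_nonpos.2 (hr (not_lt.1 (mem_filter.1 hj).2)))
  rw [sum_congr rfl hlt, sum_congr rfl hge, sum_const_zero, add_zero]
  congr 1
  ext j
  simp

/-- The larger root of `x ^ 2 - (a - N) * x - N * (a + S)`. -/
noncomputable def largerRoot (a N S : ℝ) : ℝ :=
  (a - N + √((a + N) ^ 2 + 4 * N * S)) / 2

theorem largerRoot_mul_add {a N S : ℝ} (h : 0 ≤ N * S) :
    largerRoot a N S * (largerRoot a N S + N) = a * largerRoot a N S + N * (a + S) := by
  have hs := Real.sq_sqrt (show 0 ≤ (a + N) ^ 2 + 4 * N * S by nlinarith [sq_nonneg (a + N)])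
  unfold largerRoot
  linear_combination hs / 4

theorem le_largerRoot {a N S : ℝ} (h : 0 ≤ N * S) : a ≤ largerRoot a N S := by
  have : |a + N| ≤ √((a + N) ^ 2 + 4 * N * S) := by
    rw [← Real.sqrt_sq_eq_abs]; gcongr; linarith
  unfold largerRoot
  linarith [le_abs_self (a + N)]

theorem specRad_le_largerRoot {n : ℕ} {A : Matrix (Fin n) (Fin n) ℝ} (hA : ∀ k j, 0 ≤ A k j)
    (hdiag : ∀ k, A k k = 0) {p : Fin n → ℝ} (hp : ∀ k, 0 < p k) {N : ℝ} (hN : 0 < N)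
    (hAN : ∀ k j, A k j * p j ≤ N * p k) {r : Fin n → ℝ} (hr : ∀ k, ∑ j, A k j * p j = r k * p k)
    (hanti : Antitone r) (i : Fin n) :
    specRad A ≤ largerRoot (r i) N (∑ k ∈ Iio i, (r k - r i)) := by
  set S := ∑ k ∈ Iio i, (r k - r i)
  set ψ := largerRoot (r i) N S
  have hNS : 0 ≤ N * S :=
    mul_nonneg hN.le (sum_nonneg fun k hk => sub_nonneg.2 (hanti (mem_Iio.1 hk).le))
  have hr0 : ∀ k, 0 ≤ r k := fun k => nonneg_of_mul_nonneg_left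
    ((hr k).symm ▸ sum_nonneg fun j _ => mul_nonneg (hA k j) (hp j).le) (hp k)
  have hψ : r i ≤ ψ := le_largerRoot hNS
  refine specRad_le_of_mulVec_le hA (w := fun j => p j * (ψ + N + (r j - r i)))
    (fun j => mul_pos (hp j) (by linarith [hr0 j])) ((hr0 i).trans hψ) fun k => ?_
  have hrow := sum_mul_le_mul_sum_max_sub (x := fun j => r j - r i) (k := k)
    (fun j => mul_nonneg (hA k j) (hp j).le) (hAN k) (by simp [hdiag])
  rw [hanti.sum_max_sub_zero] at hrow
  calc (A *ᵥ fun j => p j * (ψ + N + (r j - r i))) k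
      = (ψ + N) * ∑ j, A k j * p j + ∑ j, A k j * p j * (r j - r i) := by
        simp only [mulVec, dotProduct, mul_sum, ← sum_add_distrib]
        congr 1; ext j; ring
    _ ≤ (ψ + N) * (r k * p k) + N * p k * (S - (r k - r i)) := by rw [hr k]; gcongr
    _ = (ψ • fun j => p j * (ψ + N + (r j - r i))) k := by
        simp only [Pi.smul_apply, smul_eq_mul]
        linear_combination (-p k) * largerRoot_mul_add (a := r i) hNS

theorem SimpleGraph.Connected.sum_dist_pos {V : Type*} [Fintype V] [Nontrivial V]
    {G : SimpleGraph V} (hG : G.Connected) (i : V) : 0 < ∑ j, (G.dist i j : ℝ) := by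
  obtain ⟨j, hj⟩ := exists_ne i
  exact (Nat.cast_pos.2 (hG.pos_dist_of_ne hj.symm)).trans_le
    (single_le_sum (fun k _ => Nat.cast_nonneg _) (mem_univ j))

theorem stmt_14 {n : ℕ} (hn : 2 ≤ n) (G : SimpleGraph (Fin n)) (hconn : G.Connected)
    (α : ℝ) (D : Fin n → ℝ) (hD : ∀ i, D i = ∑ j, (G.dist i j : ℝ))
    (𝕄 : Fin n → ℝ)
    (h𝕄 : ∀ i, 𝕄 i = (∑ j, (G.dist i j : ℝ) * (D j) ^ α) / (D i) ^ α)
    (hord : ∀ i j : Fin n, i ≤ j → 𝕄 j ≤ 𝕄 i)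
    (N : ℝ)
    (hN : IsGreatest {x | ∃ i j : Fin n, x = (G.dist i j : ℝ) * (D j) ^ α / (D i) ^ α} N) :
    ∀ i : Fin n,
      specRad (Matrix.of fun i j : Fin n => (G.dist i j : ℝ)) ≤
        (𝕄 i - N +
          Real.sqrt ((𝕄 i + N) ^ 2 + 4 * N * ∑ k ∈ Finset.Iio i, (𝕄 k - 𝕄 i))) / 2 := by
  intro i
  have : Nontrivial (Fin n) := Fin.nontrivial_iff_two_le.2 hn
  have hp : ∀ j, 0 < D j ^ α := fun j => rpow_pos_of_pos (hD j ▸ hconn.sum_dist_pos j) α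
  have hNle : ∀ k j, (G.dist k j : ℝ) * D j ^ α ≤ N * D k ^ α := fun k j =>
    (div_le_iff₀ (hp k)).1 (hN.2 ⟨k, j, rfl⟩)
  obtain ⟨u, v, huv⟩ := exists_pair_ne (Fin n)
  have hN0 : 0 < N := pos_of_mul_pos_left ((mul_pos (Nat.cast_pos.2 (hconn.pos_dist_of_ne huv))
    (hp v)).trans_le (hNle u v)) (hp u).le
  exact specRad_le_largerRoot (fun k j => Nat.cast_nonneg _) (fun k => by simp) hp hN0 hNle
    (fun k => by rw [h𝕄, div_mul_cancel₀ _ (hp k).ne']) hord i
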